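/- arXiv:2106.07042 — 3 statements merged into one kernel-verified Lean document; each statement's English description precedes it below -/
import Mathlib

section
/- Among all hyperstars (S_n)^k with a fixed total number of vertices t (so t = (n-1)(k-1)+1), the energy is minimized by the ordinary star S_t with energy 2√(t-1), and maximized by (S_2)^t with energy 2(t-1). Equivalently, the function f(x) = 2(t-1)(x-2)/(x-1) - (x-2) + √((x-2)² + 4(t-1)) is increasing on [2, t]. -/
open Matrix BigOperators

set_option linter.unusedSectionVars false

variable {V : Type*} [Fintype V] [DecidableEq V]

/-- Adjacency matrix of a (multi-)hypergraph given by its multiset of edges: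
entry `(i,j)` is the number of edges containing both `i` and `j`, with zero diagonal. -/
def adjacencyMatrix (E : Multiset (Finset V)) : Matrix V V ℝ :=
  Matrix.of fun i j => if i = j then 0 else ((E.filter (fun e => i ∈ e ∧ j ∈ e)).card : ℝ)

lemma adjacency_isHermitian (E : Multiset (Finset V)) : (adjacencyMatrix E).IsHermitian := by
  unfold Matrix.IsHermitian
  ext i j
  by_cases h : i = j
  · subst h; simp [adjacencyMatrix]
  · simp only [adjacencyMatrix, Matrix.conjTranspose_apply, Matrix.of_apply, h, Ne.symm h,
      if_false, star_trivial]
    congr 1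
    exact congrArg Multiset.card (Multiset.filter_congr (fun e _ => and_comm))

/-- Energy of a (multi-)hypergraph: sum of the absolute values of the adjacency eigenvalues. -/
noncomputable def energy (E : Multiset (Finset V)) : ℝ :=
  ∑ i, |(adjacency_isHermitian E).eigenvalues i|

/-- Degree of a vertex: the number of edges containing it. -/
def hdegree (E : Multiset (Finset V)) (v : V) : ℕ := (E.filter (fun e => v ∈ e)).card

/-- Zagreb index: sum of squares of vertex degrees. -/
def zagreb (E : Multiset (Finset V)) : ℕ := ∑ v, (hdegree E v)^2

/-- The `k`-uniform hyperstar `(S_n)^k`: the power hypergraph of the star on `n` vertices.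
The center is `none`; the `j`-th edge consists of the center together with the `k-1`
vertices `some (j, i)` (the original leaf plus the `k-2` added vertices). -/
def hyperstar (n k : ℕ) : Multiset (Finset (Option (Fin (n-1) × Fin (k-1)))) :=
  (Finset.univ : Finset (Fin (n-1))).val.map
    (fun j => insert none ((Finset.univ : Finset (Fin (k-1))).image (fun i => some (j, i))))


section Aux
open Polynomial

abbrev HV (N K : ℕ) := Option (Fin N × Fin K)

noncomputable def sQ (N K : ℕ) : ℝ := Real.sqrt (((K:ℝ)-1)^2 + 4*((N:ℝ)*(K:ℝ)))
noncomputable def la1 (N K : ℕ) : ℝ := (((K:ℝ)-1) + sQ N K)/2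
noncomputable def la2 (N K : ℕ) : ℝ := (((K:ℝ)-1) - sQ N K)/2

section Scalars
variable {N K : ℕ}

lemma hc' (hK : 1 ≤ K) : (0:ℝ) ≤ (K:ℝ)-1 := by
  have : (1:ℝ) ≤ (K:ℝ) := by exact_mod_cast hK
  linarith

lemma hT' (hN : 1 ≤ N) (hK : 1 ≤ K) : (1:ℝ) ≤ (N:ℝ)*(K:ℝ) := by
  have h1 : (1:ℝ) ≤ (N:ℝ) := by exact_mod_cast hN
  have h2 : (1:ℝ) ≤ (K:ℝ) := by exact_mod_cast hK
  nlinarith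

lemma sQ_sq : (sQ N K)^2 = ((K:ℝ)-1)^2 + 4*((N:ℝ)*(K:ℝ)) := by
  rw [sQ, Real.sq_sqrt]
  have h1 : (0:ℝ) ≤ (N:ℝ)*(K:ℝ) := by positivity
  positivity

lemma sQ_gt_c (hN : 1 ≤ N) (hK : 1 ≤ K) : ((K:ℝ)-1) < sQ N K := by
  rw [sQ]
  rw [show ((K:ℝ)-1)^2 + 4*((N:ℝ)*(K:ℝ)) = ((K:ℝ)-1)^2 + 4*((N:ℝ)*(K:ℝ)) from rfl]
  have h := hT' hN hK
  have hc := hc' hK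
  nlinarith [Real.sq_sqrt (show (0:ℝ) ≤ ((K:ℝ)-1)^2 + 4*((N:ℝ)*(K:ℝ)) by nlinarith),
    Real.sqrt_nonneg (((K:ℝ)-1)^2 + 4*((N:ℝ)*(K:ℝ)))]

lemma la1_pos (hN : 1 ≤ N) (hK : 1 ≤ K) : 0 < la1 N K := by
  have := sQ_gt_c hN hK
  have := hc' hK
  rw [la1]; linarith

lemma la2_neg (hN : 1 ≤ N) (hK : 1 ≤ K) : la2 N K < 0 := by
  have := sQ_gt_c hN hK
  rw [la2]; linarith

lemma la_add : la1 N K + la2 N K = (K:ℝ)-1 := by rw [la1, la2]; ring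

lemma la_mul : la1 N K * la2 N K = -((N:ℝ)*(K:ℝ)) := by
  have h := sQ_sq (N := N) (K := K)
  rw [la1, la2]; nlinarith [h]

lemma la_sub : la1 N K - la2 N K = sQ N K := by rw [la1, la2]; ring

end Scalars

/-- step vector -/
def stepv {m : ℕ} (c : Fin m) : Fin m → ℝ := fun a => if a.val < c.val then 1 else if a = c then -(c.val:ℝ) else 0

lemma sum_ite_lt {m : ℕ} (c : Fin m) : ∑ a : Fin m, (if a.val < c.val then (1:ℝ) else 0) = c.val := by
  rw [Fin.sum_univ_eq_sum_range (fun x => if x < c.val then (1:ℝ) else 0) m]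
  rw [Finset.sum_boole]
  have : (Finset.range m).filter (fun x => x < c.val) = Finset.range c.val := by
    ext x; simp; omega
  rw [this]
  simp

lemma stepv_sum {m : ℕ} (c : Fin m) : ∑ a : Fin m, stepv c a = 0 := by
  have hpt : ∀ a : Fin m, stepv c a =
      (if a.val < c.val then (1:ℝ) else 0) + (if a = c then -(c.val:ℝ) else 0) := by
    intro a
    unfold stepv
    split_ifs with h1 h2 <;> simp_all [Fin.ext_iff] <;> omega
  rw [Finset.sum_congr rfl (fun a _ => hpt a), Finset.sum_add_distrib, sum_ite_lt]
  rw [Finset.sum_ite_eq' Finset.univ c (fun _ => -(c.val:ℝ))]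
  simp

lemma stepv_dot {m : ℕ} (c c' : Fin m) :
    ∑ a : Fin m, stepv c a * stepv c' a = if c = c' then ((c.val:ℝ) + (c.val:ℝ)^2) else 0 := by
  rcases lt_trichotomy c.val c'.val with h|h|h
  · have hne : c ≠ c' := by intro he; subst he; omega
    rw [if_neg hne]
    have hpt : ∀ a : Fin m, stepv c a * stepv c' a = stepv c a := by
      intro a
      unfold stepv
      split_ifs <;> simp_all [Fin.ext_iff] <;> omega
    rw [Finset.sum_congr rfl (fun a _ => hpt a), stepv_sum]
  · have he : c = c' := Fin.ext h
    subst he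
    rw [if_pos rfl]
    have hpt : ∀ a : Fin m, stepv c a * stepv c a =
        (if a.val < c.val then (1:ℝ) else 0) + (if a = c then ((c.val:ℝ))^2 else 0) := by
      intro a
      unfold stepv
      split_ifs <;> simp_all [Fin.ext_iff] <;> try ring
    rw [Finset.sum_congr rfl (fun a _ => hpt a), Finset.sum_add_distrib, sum_ite_lt]
    rw [Finset.sum_ite_eq' Finset.univ c (fun _ => ((c.val:ℝ))^2)]
    simp
  · have hne : c ≠ c' := by intro he; subst he; omega
    rw [if_neg hne]
    have hpt : ∀ a : Fin m, stepv c a * stepv c' a = stepv c' a := by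
      intro a
      unfold stepv
      split_ifs <;> simp_all [Fin.ext_iff] <;> omega
    rw [Finset.sum_congr rfl (fun a _ => hpt a), stepv_sum]
def Mex (N K : ℕ) : Matrix (HV N K) (HV N K) ℝ := fun v w =>
  match v, w with
  | none, none => 0
  | none, some _ => 1
  | some _, none => 1
  | some (a,b), some (c,d) => if a = c then (if b = d then 0 else 1) else 0

lemma Madj_eq (N K : ℕ) :
    adjacencyMatrix (V := HV N K) (hyperstar (N+1) (K+1)) = Mex N K := by
  show adjacencyMatrix ((Finset.univ : Finset (Fin N)).val.map
    (fun j => insert none ((Finset.univ : Finset (Fin K)).image (fun i => some (j, i))))) = Mex N K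
  ext v w
  by_cases hvw : v = w
  · subst hvw
    match v with
    | none => simp [adjacencyMatrix, Mex]
    | some (a,b) => simp [adjacencyMatrix, Mex]
  · simp only [adjacencyMatrix, Matrix.of_apply, if_neg hvw]
    rw [Multiset.filter_map, Multiset.card_map]
    have key : ∀ (p : Fin N → Prop) (inst : DecidablePred p),
        (Multiset.filter p (Finset.univ : Finset (Fin N)).val).card = (Finset.univ.filter p).card := by
      intro p inst; rfl
    match v, w with
    | none, none => exact absurd rfl hvw
    | none, some (a,b) =>
      rw [Mex, key]
      have : Finset.univ.filter ((fun e => none ∈ e ∧ some (a,b) ∈ e) ∘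
          (fun j : Fin N => insert none ((Finset.univ : Finset (Fin K)).image (fun i => some (j, i))))) = {a} := by
        ext l
        simp [Prod.ext_iff, eq_comm]
      rw [this]; simp
    | some (a,b), none =>
      rw [Mex, key]
      have : Finset.univ.filter ((fun e => some (a,b) ∈ e ∧ none ∈ e) ∘
          (fun j : Fin N => insert none ((Finset.univ : Finset (Fin K)).image (fun i => some (j, i))))) = {a} := by
        ext l
        simp [Prod.ext_iff, eq_comm]
      rw [this]; simp
    | some (a,b), some (c,d) =>
      rw [Mex, key]
      by_cases hac : a = c
      · subst hac
        have hbd : b ≠ d := by simp_all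
        have : Finset.univ.filter ((fun e => some (a,b) ∈ e ∧ some (a,d) ∈ e) ∘
            (fun j : Fin N => insert none ((Finset.univ : Finset (Fin K)).image (fun i => some (j, i))))) = {a} := by
          ext l
          simp [Prod.ext_iff, eq_comm]
        rw [this]; simp [hbd]
      · have : Finset.univ.filter ((fun e => some (a,b) ∈ e ∧ some (c,d) ∈ e) ∘
            (fun j : Fin N => insert none ((Finset.univ : Finset (Fin K)).image (fun i => some (j, i))))) = ∅ := by
          ext l
          simp [Prod.ext_iff, eq_comm]
          intro h1 h2; exact absurd (h1.trans h2.symm) hac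
        rw [this]; simp [hac]
def wvec (N K : ℕ) (x : ℝ) : HV N K → ℝ := fun v => match v with | none => x | some _ => 1
def Uvec (N K : ℕ) (j : Fin N) : HV N K → ℝ := fun v => match v with | none => 0 | some (a,_) => stepv j a
def uvec (N K : ℕ) (j : Fin N) (i : Fin K) : HV N K → ℝ :=
  fun v => match v with | none => 0 | some (a,b) => if a = j then stepv i b else 0

section Dots
variable {N K : ℕ}

lemma sum_HV (f : HV N K → ℝ) : ∑ v : HV N K, f v = f none + ∑ a : Fin N, ∑ b : Fin K, f (some (a,b)) := by
  rw [Fintype.sum_option, Fintype.sum_prod_type]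

lemma dot_ww (x y : ℝ) : ∑ v : HV N K, wvec N K x v * wvec N K y v = x*y + (N:ℝ)*(K:ℝ) := by
  rw [sum_HV]
  simp [wvec, Finset.sum_const]

lemma dot_wU (x : ℝ) (j : Fin N) : ∑ v : HV N K, wvec N K x v * Uvec N K j v = 0 := by
  rw [sum_HV]
  simp only [wvec, Uvec, mul_zero, one_mul, zero_add, Finset.sum_const, Fintype.card_fin,
    nsmul_eq_mul]
  rw [← Finset.mul_sum, stepv_sum, mul_zero]

lemma dot_wu (x : ℝ) (j : Fin N) (i : Fin K) :
    ∑ v : HV N K, wvec N K x v * uvec N K j i v = 0 := by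
  rw [sum_HV]
  simp only [wvec, uvec, mul_zero, one_mul, zero_add, mul_ite]
  rw [Finset.sum_comm]
  simp [Finset.sum_ite_eq', stepv_sum]

lemma dot_UU (j j' : Fin N) :
    ∑ v : HV N K, Uvec N K j v * Uvec N K j' v = (K:ℝ) * (if j = j' then ((j.val:ℝ) + (j.val:ℝ)^2) else 0) := by
  rw [sum_HV]
  simp only [Uvec, mul_zero, zero_add]
  rw [Finset.sum_comm]
  simp only [Finset.sum_const, Fintype.card_fin, nsmul_eq_mul, stepv_dot, ← Finset.mul_sum]
  simp

lemma dot_Uu (j j' : Fin N) (i : Fin K) :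
    ∑ v : HV N K, Uvec N K j v * uvec N K j' i v = 0 := by
  rw [sum_HV]
  simp only [Uvec, uvec, mul_zero, zero_add, mul_ite]
  have : ∀ a : Fin N, ∑ b : Fin K, (if a = j' then stepv j a * stepv i b else 0) = 0 := by
    intro a
    by_cases h : a = j'
    · simp [h, ← Finset.mul_sum, stepv_sum]
    · simp [h]
  rw [Finset.sum_congr rfl (fun a _ => this a)]
  simp

lemma dot_uu (j j' : Fin N) (i i' : Fin K) :
    ∑ v : HV N K, uvec N K j i v * uvec N K j' i' v =
      if j = j' then (if i = i' then ((i.val:ℝ) + (i.val:ℝ)^2) else 0) else 0 := by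
  rw [sum_HV]
  simp only [uvec, mul_zero, zero_add]
  have : ∀ a : Fin N, ∑ b : Fin K, (if a = j then stepv i b else 0) * (if a = j' then stepv i' b else 0)
      = if a = j then (if a = j' then (if i = i' then ((i.val:ℝ) + (i.val:ℝ)^2) else 0) else 0) else 0 := by
    intro a
    by_cases h1 : a = j <;> by_cases h2 : a = j' <;> simp [h1, h2, stepv_dot]
  rw [Finset.sum_congr rfl (fun a _ => this a)]
  by_cases h : j = j'
  · subst h; simp [Finset.sum_ite_eq']
  · have : ∀ a : Fin N, (if a = j then (if a = j' then (if i = i' then ((i.val:ℝ) + (i.val:ℝ)^2) else 0) else 0) else 0) = 0 := by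
      intro a
      by_cases h1 : a = j <;> by_cases h2 : a = j' <;> simp_all
    rw [Finset.sum_congr rfl (fun a _ => this a)]
    simp [h]

-- eigen-equation sums
lemma sum_ite_ne' (b : Fin K) : ∑ b' : Fin K, (if b = b' then (0:ℝ) else 1) = (K:ℝ) - 1 := by
  have : ∀ b' : Fin K, (if b = b' then (0:ℝ) else 1) = 1 - (if b = b' then 1 else 0) := by
    intro b'; split_ifs <;> ring
  rw [Finset.sum_congr rfl (fun b' _ => this b'), Finset.sum_sub_distrib]
  simp [Finset.sum_ite_eq]

lemma sum_ite_ne_mul (b : Fin K) (h : Fin K → ℝ) :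
    ∑ b' : Fin K, (if b = b' then (0:ℝ) else 1) * h b' = (∑ b' : Fin K, h b') - h b := by
  have : ∀ b' : Fin K, (if b = b' then (0:ℝ) else 1) * h b' = h b' - (if b = b' then h b' else 0) := by
    intro b'; split_ifs <;> ring
  rw [Finset.sum_congr rfl (fun b' _ => this b'), Finset.sum_sub_distrib]
  simp [Finset.sum_ite_eq]

lemma sum_ite_ne_fun (b : Fin K) (h : Fin K → ℝ) :
    ∑ b' : Fin K, (if b = b' then (0:ℝ) else h b') = (∑ b' : Fin K, h b') - h b := by
  have : ∀ b' : Fin K, (if b = b' then (0:ℝ) else h b') = h b' - (if b = b' then h b' else 0) := by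
    intro b'; split_ifs <;> ring
  rw [Finset.sum_congr rfl (fun b' _ => this b'), Finset.sum_sub_distrib]
  simp [Finset.sum_ite_eq]

lemma sum_ite_ne_const (b : Fin K) (c : ℝ) :
    ∑ b' : Fin K, (if b = b' then (0:ℝ) else c) = ((K:ℝ) - 1) * c := by
  rw [sum_ite_ne_fun]
  simp [Finset.sum_const]
  ring

lemma sum_M_w_none (x : ℝ) :
    ∑ w : HV N K, Mex N K none w * wvec N K x w = (N:ℝ)*(K:ℝ) := by
  rw [sum_HV]
  simp [Mex, wvec, Finset.sum_const]

lemma sum_M_w_some (x : ℝ) (a : Fin N) (b : Fin K) :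
    ∑ w : HV N K, Mex N K (some (a,b)) w * wvec N K x w = x + ((K:ℝ) - 1) := by
  rw [sum_HV]
  simp only [Mex, wvec, mul_one]
  have : ∀ a' : Fin N, ∑ b' : Fin K, (if a = a' then (if b = b' then (0:ℝ) else 1) else 0)
      = if a = a' then (K:ℝ) - 1 else 0 := by
    intro a'
    by_cases h : a = a' <;> simp [h, sum_ite_ne']
  rw [Finset.sum_congr rfl (fun a' _ => this a')]
  simp [Finset.sum_ite_eq]

lemma sum_M_U_none (j : Fin N) :
    ∑ w : HV N K, Mex N K none w * Uvec N K j w = 0 := by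
  rw [sum_HV]
  simp only [Mex, Uvec, mul_zero, one_mul, zero_add, Finset.sum_const, Fintype.card_fin,
    nsmul_eq_mul]
  rw [← Finset.mul_sum, stepv_sum, mul_zero]

lemma sum_M_U_some (j : Fin N) (a : Fin N) (b : Fin K) :
    ∑ w : HV N K, Mex N K (some (a,b)) w * Uvec N K j w = ((K:ℝ) - 1) * stepv j a := by
  rw [sum_HV]
  simp only [Mex, Uvec, mul_zero, zero_add]
  have : ∀ a' : Fin N, ∑ b' : Fin K, (if a = a' then (if b = b' then (0:ℝ) else 1) else 0) * stepv j a'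
      = if a = a' then ((K:ℝ) - 1) * stepv j a' else 0 := by
    intro a'
    by_cases h : a = a' <;> simp [h, sum_ite_ne_const]
  rw [Finset.sum_congr rfl (fun a' _ => this a')]
  simp [Finset.sum_ite_eq]

lemma sum_M_u_none (j : Fin N) (i : Fin K) :
    ∑ w : HV N K, Mex N K none w * uvec N K j i w = 0 := by
  rw [sum_HV]
  simp only [Mex, uvec, mul_zero, one_mul, zero_add]
  rw [Finset.sum_comm]
  simp [Finset.sum_ite_eq', stepv_sum]

lemma sum_M_u_some (j : Fin N) (i : Fin K) (a : Fin N) (b : Fin K) :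
    ∑ w : HV N K, Mex N K (some (a,b)) w * uvec N K j i w = -(if a = j then stepv i b else 0) := by
  rw [sum_HV]
  simp only [Mex, uvec, mul_zero, zero_add]
  have : ∀ a' : Fin N, ∑ b' : Fin K, (if a = a' then (if b = b' then (0:ℝ) else 1) else 0) * (if a' = j then stepv i b' else 0)
      = if a = a' then (if a' = j then -(stepv i b) else 0) else 0 := by
    intro a'
    by_cases h1 : a = a'
    · by_cases h2 : a' = j
      · simp [h1, h2, sum_ite_ne_fun, stepv_sum]
      · simp [h1, h2]
    · simp [h1]
  rw [Finset.sum_congr rfl (fun a' _ => this a')]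
  by_cases h : a = j <;> simp [Finset.sum_ite_eq, h]

end Dots
noncomputable def Pm (N K : ℕ) : Matrix (HV N K) (HV N K) ℝ := fun v col =>
  match col with
  | none => wvec N K (-(la2 N K)) v
  | some (j, i) =>
    if i.val = 0 then
      (if j.val = 0 then wvec N K (-(la1 N K)) v else Uvec N K j v)
    else uvec N K j i v

noncomputable def muf (N K : ℕ) : HV N K → ℝ := fun col =>
  match col with
  | none => la1 N K
  | some (j, i) => if i.val = 0 then (if j.val = 0 then la2 N K else ((K:ℝ)-1)) else -1

noncomputable def dfun (N K : ℕ) : HV N K → ℝ := fun col =>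
  match col with
  | none => (la2 N K)^2 + (N:ℝ)*(K:ℝ)
  | some (j, i) =>
    if i.val = 0 then
      (if j.val = 0 then (la1 N K)^2 + (N:ℝ)*(K:ℝ)
       else (K:ℝ) * ((j.val:ℝ) + (j.val:ℝ)^2))
    else ((i.val:ℝ) + (i.val:ℝ)^2)

section Main
variable (N K : ℕ)

lemma MP_eq_PD : Mex N K * Pm N K = Pm N K * Matrix.diagonal (muf N K) := by
  ext v col
  rw [Matrix.mul_apply, Matrix.mul_diagonal]
  match col with
  | none =>
    simp only [Pm, muf]
    match v with
    | none =>
      rw [sum_M_w_none]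
      show (N:ℝ)*(K:ℝ) = wvec N K (-(la2 N K)) none * la1 N K
      show (N:ℝ)*(K:ℝ) = (-(la2 N K)) * la1 N K
      have := la_mul (N := N) (K := K)
      nlinarith [this]
    | some (a,b) =>
      rw [sum_M_w_some]
      show -(la2 N K) + ((K:ℝ) - 1) = wvec N K (-(la2 N K)) (some (a,b)) * la1 N K
      show -(la2 N K) + ((K:ℝ) - 1) = 1 * la1 N K
      have := la_add (N := N) (K := K)
      linarith
  | some (j, i) =>
    by_cases hi : i.val = 0
    · by_cases hj : j.val = 0
      · simp only [Pm, muf, if_pos hi, if_pos hj]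
        match v with
        | none =>
          rw [sum_M_w_none]
          show (N:ℝ)*(K:ℝ) = (-(la1 N K)) * la2 N K
          have := la_mul (N := N) (K := K)
          nlinarith [this]
        | some (a,b) =>
          rw [sum_M_w_some]
          show -(la1 N K) + ((K:ℝ) - 1) = 1 * la2 N K
          have := la_add (N := N) (K := K)
          linarith
      · simp only [Pm, muf, if_pos hi, if_neg hj]
        match v with
        | none =>
          rw [sum_M_U_none]
          show (0:ℝ) = Uvec N K j none * ((K:ℝ)-1)
          show (0:ℝ) = 0 * ((K:ℝ)-1)
          ring
        | some (a,b) =>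
          rw [sum_M_U_some]
          show ((K:ℝ) - 1) * stepv j a = Uvec N K j (some (a,b)) * ((K:ℝ)-1)
          show ((K:ℝ) - 1) * stepv j a = stepv j a * ((K:ℝ)-1)
          ring
    · simp only [Pm, muf, if_neg hi]
      match v with
      | none =>
        rw [sum_M_u_none]
        show (0:ℝ) = uvec N K j i none * (-1)
        show (0:ℝ) = 0 * (-1)
        ring
      | some (a,b) =>
        rw [sum_M_u_some]
        show -(if a = j then stepv i b else 0) = uvec N K j i (some (a,b)) * (-1)
        show -(if a = j then stepv i b else 0) = (if a = j then stepv i b else 0) * (-1)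
        ring

lemma PtP (hN : 1 ≤ N) (hK : 1 ≤ K) :
    (Pm N K)ᵀ * Pm N K = Matrix.diagonal (dfun N K) := by
  ext c1 c2
  rw [Matrix.mul_apply]
  simp only [Matrix.transpose_apply]
  match c1, c2 with
  | none, none =>
    simp only [Pm]
    rw [dot_ww, Matrix.diagonal_apply_eq]
    show _ = dfun N K none
    rw [dfun]
    ring
  | none, some (j, i) =>
    rw [Matrix.diagonal_apply_ne _ (by simp)]
    simp only [Pm]
    by_cases hi : i.val = 0
    · by_cases hj : j.val = 0
      · simp only [if_pos hi, if_pos hj]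
        rw [dot_ww]
        have := la_mul (N := N) (K := K)
        have := la_add (N := N) (K := K)
        nlinarith [la_mul (N := N) (K := K)]
      · simp only [if_pos hi, if_neg hj]
        rw [dot_wU]
    · simp only [if_neg hi]
      rw [dot_wu]
  | some (j, i), none =>
    rw [Matrix.diagonal_apply_ne _ (by simp)]
    simp only [Pm]
    have hcomm : ∀ f g : HV N K → ℝ, ∑ v : HV N K, f v * g v = ∑ v : HV N K, g v * f v := by
      intro f g; exact Finset.sum_congr rfl (fun v _ => mul_comm _ _)
    by_cases hi : i.val = 0
    · by_cases hj : j.val = 0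
      · simp only [if_pos hi, if_pos hj]
        rw [hcomm, dot_ww]
        nlinarith [la_mul (N := N) (K := K)]
      · simp only [if_pos hi, if_neg hj]
        rw [hcomm, dot_wU]
    · simp only [if_neg hi]
      rw [hcomm, dot_wu]
  | some (j, i), some (j', i') =>
    simp only [Pm]
    have hcomm : ∀ f g : HV N K → ℝ, ∑ v : HV N K, f v * g v = ∑ v : HV N K, g v * f v := by
      intro f g; exact Finset.sum_congr rfl (fun v _ => mul_comm _ _)
    by_cases hi : i.val = 0 <;> by_cases hi' : i'.val = 0
    · -- both i = 0
      by_cases hj : j.val = 0 <;> by_cases hj' : j'.val = 0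
      · -- both w-type: j = j' = 0, i = i' = 0 so c1 = c2
        have he : (⟨j, i⟩ : Fin N × Fin K) = ⟨j', i'⟩ := by
          ext <;> simp_all [Fin.ext_iff]
        simp only [if_pos hi, if_pos hi', if_pos hj, if_pos hj']
        rw [dot_ww]
        rw [show (some (j,i) : HV N K) = some (j', i') by rw [he]]
        rw [Matrix.diagonal_apply_eq]
        show _ = dfun N K (some (j', i'))
        rw [dfun]
        simp only [if_pos hi', if_pos hj']
        nlinarith [la_mul (N := N) (K := K)]
      · simp only [if_pos hi, if_pos hi', if_pos hj, if_neg hj']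
        rw [dot_wU, Matrix.diagonal_apply_ne _ (by simp [Prod.ext_iff, Fin.ext_iff]; omega)]
      · simp only [if_pos hi, if_pos hi', if_neg hj, if_pos hj']
        rw [hcomm, dot_wU, Matrix.diagonal_apply_ne _ (by simp [Prod.ext_iff, Fin.ext_iff]; omega)]
      · simp only [if_pos hi, if_pos hi', if_neg hj, if_neg hj']
        rw [dot_UU]
        rcases eq_or_ne j j' with he | he
        · subst he
          have : (some (j,i) : HV N K) = some (j, i') := by simp [Prod.ext_iff, Fin.ext_iff]; omega
          rw [this, Matrix.diagonal_apply_eq]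
          show _ = dfun N K (some (j, i'))
          rw [dfun]
          simp [if_pos hi', if_neg hj]
        · rw [if_neg he, Matrix.diagonal_apply_ne _ (by simp [Prod.ext_iff]; tauto)]
          ring
    · -- i = 0, i' ≠ 0 : c1 is w or U type, c2 is u type
      have hne : (some (j,i) : HV N K) ≠ some (j', i') := by simp [Prod.ext_iff, Fin.ext_iff]; omega
      rw [Matrix.diagonal_apply_ne _ hne]
      by_cases hj : j.val = 0
      · simp only [if_pos hi, if_neg hi', if_pos hj]
        rw [dot_wu]
      · simp only [if_pos hi, if_neg hi', if_neg hj]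
        rw [dot_Uu]
    · -- i ≠ 0, i' = 0
      have hne : (some (j,i) : HV N K) ≠ some (j', i') := by simp [Prod.ext_iff, Fin.ext_iff]; omega
      rw [Matrix.diagonal_apply_ne _ hne]
      by_cases hj' : j'.val = 0
      · simp only [if_neg hi, if_pos hi', if_pos hj']
        rw [hcomm, dot_wu]
      · simp only [if_neg hi, if_pos hi', if_neg hj']
        rw [hcomm, dot_Uu]
    · -- both u type
      simp only [if_neg hi, if_neg hi']
      rw [dot_uu]
      rcases eq_or_ne j j' with he | he
      · subst he
        rcases eq_or_ne i i' with he2 | he2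
        · subst he2
          rw [if_pos rfl, if_pos rfl, Matrix.diagonal_apply_eq]
          show _ = dfun N K (some (j, i))
          rw [dfun]
          simp [if_neg hi]
        · rw [if_pos rfl, if_neg he2, Matrix.diagonal_apply_ne _ (by simp [Prod.ext_iff]; tauto)]
      · rw [if_neg he, Matrix.diagonal_apply_ne _ (by simp [Prod.ext_iff]; tauto)]

end Main
open Polynomial in
lemma charpoly_similar {ι : Type*} [Fintype ι] [DecidableEq ι] (P A Q : Matrix ι ι ℝ)
    (h : P * Q = 1) : (P * A * Q).charpoly = A.charpoly := by
  have hmap : (C : ℝ →+* ℝ[X]).mapMatrix P * (C : ℝ →+* ℝ[X]).mapMatrix Q = 1 := by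
    rw [← _root_.map_mul, h, _root_.map_one]
  have hkey : Matrix.charmatrix (P * A * Q) =
      ((C : ℝ →+* ℝ[X]).mapMatrix P) * Matrix.charmatrix A * ((C : ℝ →+* ℝ[X]).mapMatrix Q) := by
    unfold Matrix.charmatrix
    rw [Matrix.mul_sub, Matrix.sub_mul]
    congr 1
    · have hc := (Matrix.scalar_commute (X : ℝ[X]) (fun r' => Commute.all _ _)
        ((C : ℝ →+* ℝ[X]).mapMatrix P)).eq
      symm
      calc ((C : ℝ →+* ℝ[X]).mapMatrix P) * Matrix.scalar ι (X : ℝ[X]) * ((C : ℝ →+* ℝ[X]).mapMatrix Q)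
          = Matrix.scalar ι (X : ℝ[X]) * (((C : ℝ →+* ℝ[X]).mapMatrix P) * ((C : ℝ →+* ℝ[X]).mapMatrix Q)) := by
            rw [← hc]; rw [mul_assoc]
        _ = Matrix.scalar ι (X : ℝ[X]) := by rw [hmap, mul_one]
    · rw [← _root_.map_mul, ← _root_.map_mul]
  rw [Matrix.charpoly, Matrix.charpoly, hkey, Matrix.det_mul, Matrix.det_mul]
  have hdet : (((C : ℝ →+* ℝ[X]).mapMatrix P)).det * (((C : ℝ →+* ℝ[X]).mapMatrix Q)).det = 1 := by
    rw [← Matrix.det_mul, hmap, Matrix.det_one]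
  linear_combination (Matrix.charmatrix A).det * hdet

open Polynomial in
lemma charpoly_diag {ι : Type*} [Fintype ι] [DecidableEq ι] (d : ι → ℝ) :
    (Matrix.diagonal d).charpoly = ∏ i, (X - C (d i)) := by
  have : (Matrix.diagonal d).charmatrix = Matrix.diagonal (fun i => X - C (d i)) := by
    ext i j
    by_cases h : i = j
    · subst h; simp
    · rw [Matrix.charmatrix_apply_ne _ _ _ h, Matrix.diagonal_apply_ne _ h,
        Matrix.diagonal_apply_ne _ h]
      simp
  rw [Matrix.charpoly, this, Matrix.det_diagonal]

open Polynomial in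
lemma charpoly_hermitian {ι : Type*} [Fintype ι] [DecidableEq ι] (A : Matrix ι ι ℝ)
    (hA : A.IsHermitian) : A.charpoly = ∏ i, (X - C (hA.eigenvalues i)) := by
  have hst := hA.spectral_theorem
  set u := (Matrix.IsHermitian.eigenvectorUnitary hA : Matrix ι ι ℝ) with hu_def
  have hu : u * star u = 1 := by
    have := (Matrix.IsHermitian.eigenvectorUnitary hA).2
    rw [Unitary.mem_iff] at this
    exact this.2
  have hco : (RCLike.ofReal ∘ hA.eigenvalues : ι → ℝ) = hA.eigenvalues := by
    ext i; simp [RCLike.ofReal]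
  calc A.charpoly = (u * Matrix.diagonal (RCLike.ofReal ∘ hA.eigenvalues) * star u).charpoly := by
        exact congrArg _ hst
    _ = (Matrix.diagonal (RCLike.ofReal ∘ hA.eigenvalues)).charpoly := charpoly_similar _ _ _ hu
    _ = ∏ i, (X - C (hA.eigenvalues i)) := by rw [hco, charpoly_diag]
lemma Pm_det_isUnit (N K : ℕ) (hN : 1 ≤ N) (hK : 1 ≤ K) : IsUnit (Pm N K).det := by
  have h := congrArg Matrix.det (PtP N K hN hK)
  rw [Matrix.det_mul, Matrix.det_transpose, Matrix.det_diagonal] at h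
  have hT := hT' hN hK
  have hpos : 0 < ∏ col, dfun N K col := by
    apply Finset.prod_pos
    intro col _
    match col with
    | none =>
      show 0 < (la2 N K)^2 + (N:ℝ)*(K:ℝ)
      nlinarith [sq_nonneg (la2 N K)]
    | some (j, i) =>
      by_cases hi : i.val = 0
      · by_cases hj : j.val = 0
        · show 0 < dfun N K (some (j,i))
          rw [dfun]
          simp only [if_pos hi, if_pos hj]
          nlinarith [sq_nonneg (la1 N K)]
        · show 0 < dfun N K (some (j,i))
          rw [dfun]
          simp only [if_pos hi, if_neg hj]
          have h1 : (1:ℝ) ≤ (j.val:ℝ) := by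
            have : 1 ≤ j.val := Nat.one_le_iff_ne_zero.mpr hj
            exact_mod_cast this
          have h2 : (1:ℝ) ≤ (K:ℝ) := by exact_mod_cast hK
          nlinarith
      · show 0 < dfun N K (some (j,i))
        rw [dfun]
        simp only [if_neg hi]
        have h1 : (1:ℝ) ≤ (i.val:ℝ) := by
          have : 1 ≤ i.val := Nat.one_le_iff_ne_zero.mpr hi
          exact_mod_cast this
        nlinarith
  have hne : (Pm N K).det ≠ 0 := by
    intro h0
    rw [h0, mul_zero] at h
    linarith [h ▸ hpos]
  exact isUnit_iff_ne_zero.mpr hne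

open Polynomial in
lemma energy_eq_of_similar {W : Type*} [Fintype W] [DecidableEq W] (E : Multiset (Finset W))
    (P : Matrix W W ℝ) (μ : W → ℝ) (hdet : IsUnit P.det)
    (hMP : adjacencyMatrix E * P = P * Matrix.diagonal μ) :
    energy E = ∑ v, |μ v| := by
  set A := adjacencyMatrix E with hA_def
  have hA : A.IsHermitian := adjacency_isHermitian E
  have hsim : A = P * Matrix.diagonal μ * P⁻¹ := by
    have h1 : A * P * P⁻¹ = A := Matrix.mul_nonsing_inv_cancel_right _ _ hdet
    rw [← h1, hMP]
  have hc1 : A.charpoly = ∏ v, (X - C (μ v)) := by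
    rw [hsim, charpoly_similar _ _ _ (Matrix.mul_nonsing_inv P hdet), charpoly_diag]
  have hc2 : A.charpoly = ∏ i, (X - C (hA.eigenvalues i)) := charpoly_hermitian A hA
  have h3 : (Multiset.map (fun a => X - C a) (Finset.univ.val.map hA.eigenvalues)).prod
      = (Multiset.map (fun a => X - C a) (Finset.univ.val.map μ)).prod := by
    rw [Multiset.map_map, Multiset.map_map]
    rw [← Finset.prod_eq_multiset_prod, ← Finset.prod_eq_multiset_prod]
    exact hc2.symm.trans hc1
  have h4 := congrArg Polynomial.roots h3
  rw [Polynomial.roots_multiset_prod_X_sub_C, Polynomial.roots_multiset_prod_X_sub_C] at h4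
  show ∑ i, |hA.eigenvalues i| = ∑ v, |μ v|
  calc ∑ i, |hA.eigenvalues i| = ((Finset.univ.val.map hA.eigenvalues).map abs).sum := by
        rw [Multiset.map_map]; rfl
    _ = ((Finset.univ.val.map μ).map abs).sum := by rw [h4]
    _ = ∑ v, |μ v| := by rw [Multiset.map_map]; rfl

lemma sum_abs_muf (N' K' : ℕ) :
    ∑ v : HV (N'+1) (K'+1), |muf (N'+1) (K'+1) v| =
      (2*((N'+1:ℕ):ℝ) - 1)*(((K'+1:ℕ):ℝ)-1) + sQ (N'+1) (K'+1) := by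
  have hN : 1 ≤ N' + 1 := Nat.le_add_left 1 N'
  have hK : 1 ≤ K' + 1 := Nat.le_add_left 1 K'
  have hla1 : |la1 (N'+1) (K'+1)| = la1 (N'+1) (K'+1) := abs_of_pos (la1_pos hN hK)
  have hla2 : |la2 (N'+1) (K'+1)| = -(la2 (N'+1) (K'+1)) := abs_of_neg (la2_neg hN hK)
  have hcK : |(((K'+1:ℕ):ℝ))-1| = ((K'+1:ℕ):ℝ)-1 := abs_of_nonneg (hc' hK)
  rw [sum_HV]
  have inner : ∀ a : Fin (N'+1), ∑ b : Fin (K'+1), |muf (N'+1) (K'+1) (some (a,b))| =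
      (if a.val = 0 then -(la2 (N'+1) (K'+1)) else (((K'+1:ℕ):ℝ)-1)) + (K':ℝ) := by
    intro a
    rw [Fin.sum_univ_succ]
    have h2 : ∀ b : Fin K', |muf (N'+1) (K'+1) (some (a, b.succ))| = 1 := by
      intro b
      have : (b.succ : Fin (K'+1)).val ≠ 0 := by simp [Fin.val_succ]
      simp [muf, this]
    rw [Finset.sum_congr rfl (fun b _ => h2 b)]
    simp only [Finset.sum_const, Finset.card_univ, Fintype.card_fin, nsmul_eq_mul, mul_one]
    congr 1
    by_cases ha : a.val = 0
    · simp [muf, ha, hla2]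
    · simp [muf, ha, hcK]
  rw [Finset.sum_congr rfl (fun a _ => inner a)]
  rw [Finset.sum_add_distrib, Fin.sum_univ_succ]
  simp only [Finset.sum_const, Finset.card_univ, Fintype.card_fin, nsmul_eq_mul]
  have h0 : ((0 : Fin (N'+1)).val = 0) := rfl
  rw [if_pos h0]
  have h3 : ∀ a : Fin N', (if (a.succ : Fin (N'+1)).val = 0 then -(la2 (N'+1) (K'+1)) else (((K'+1:ℕ):ℝ)-1)) = (((K'+1:ℕ):ℝ)-1) := by
    intro a
    have : (a.succ : Fin (N'+1)).val ≠ 0 := by simp [Fin.val_succ]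
    rw [if_neg this]
  rw [Finset.sum_congr rfl (fun a _ => h3 a)]
  simp only [Finset.sum_const, Finset.card_univ, Fintype.card_fin, nsmul_eq_mul]
  have hmufnone : |muf (N'+1) (K'+1) none| = la1 (N'+1) (K'+1) := by
    rw [muf]; exact hla1
  rw [hmufnone]
  have hsub := la_sub (N := N'+1) (K := K'+1)
  push_cast
  push_cast at hsub
  linarith [hsub]

theorem energy_hyperstar (N K : ℕ) (hN : 1 ≤ N) (hK : 1 ≤ K) :
    energy (hyperstar (N+1) (K+1)) = (2*(N:ℝ) - 1)*((K:ℝ)-1) + sQ N K := by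
  obtain ⟨N', rfl⟩ : ∃ N', N = N' + 1 := ⟨N-1, by omega⟩
  obtain ⟨K', rfl⟩ : ∃ K', K = K' + 1 := ⟨K-1, by omega⟩
  have hMP : adjacencyMatrix (V := HV (N'+1) (K'+1)) (hyperstar (N'+1+1) (K'+1+1))
        * Pm (N'+1) (K'+1)
      = Pm (N'+1) (K'+1) * Matrix.diagonal (muf (N'+1) (K'+1)) := by
    rw [Madj_eq]
    exact MP_eq_PD (N'+1) (K'+1)
  have hres := energy_eq_of_similar (W := HV (N'+1) (K'+1)) (hyperstar (N'+1+1) (K'+1+1))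
    (Pm (N'+1) (K'+1)) (muf (N'+1) (K'+1)) (Pm_det_isUnit _ _ hN hK) hMP
  exact hres.trans (sum_abs_muf N' K')

lemma mono_part (t : ℕ) (ht : 2 ≤ t) :
    StrictMonoOn
      (fun x : ℝ => 2 * ((t : ℝ) - 1) * ((x - 2) / (x - 1)) - (x - 2) +
        Real.sqrt ((x - 2) ^ 2 + 4 * ((t : ℝ) - 1)))
      (Set.Icc (2 : ℝ) (t : ℝ)) := by
  have ht' : (2:ℝ) ≤ (t:ℝ) := by exact_mod_cast ht
  set a : ℝ := (t:ℝ) - 1 with ha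
  have ha1 : 1 ≤ a := by simp only [ha]; linarith
  have ha0 : 0 < a := by linarith
  apply strictMonoOn_of_deriv_pos (convex_Icc _ _)
  · apply ContinuousOn.add
    · apply ContinuousOn.sub
      · apply ContinuousOn.mul continuousOn_const
        apply ContinuousOn.div
        · fun_prop
        · fun_prop
        · intro x hx
          have : (2:ℝ) ≤ x := hx.1
          intro h; linarith [sub_eq_zero.mp h]
      · fun_prop
    · apply ContinuousOn.sqrt; fun_prop
  · intro x hx
    rw [interior_Icc, Set.mem_Ioo] at hx
    obtain ⟨hx2, hxt⟩ := hx
    have hx1 : x - 1 ≠ 0 := by intro h; nlinarith [sub_eq_zero.mp h]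
    have hx1pos : (0:ℝ) < x - 1 := by linarith
    set g : ℝ := (x - 2) ^ 2 + 4 * a with hg
    have hgpos : 0 < g := by positivity
    set s : ℝ := Real.sqrt g with hs
    have hspos : 0 < s := Real.sqrt_pos.mpr hgpos
    have hs2 : s ^ 2 = g := Real.sq_sqrt hgpos.le
    -- derivative
    have hd1 : HasDerivAt (fun x : ℝ => (x - 2) / (x - 1)) (1 / (x-1)^2) x := by
      have := (((hasDerivAt_id x).sub_const 2).div ((hasDerivAt_id x).sub_const 1) hx1)
      refine this.congr_deriv ?_
      simp only [id]
      ring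
    have hdin : HasDerivAt (fun x : ℝ => (x - 2) ^ 2 + 4 * a) (2 * (x-2)) x := by
      have := (((hasDerivAt_id x).sub_const 2).pow 2).add_const (4*a)
      refine this.congr_deriv ?_
      simp
    have hd2 : HasDerivAt (fun x : ℝ => Real.sqrt ((x - 2) ^ 2 + 4 * a))
        ((x - 2) / s) x := by
      have h := (Real.hasDerivAt_sqrt hgpos.ne').comp x hdin
      refine h.congr_deriv ?_
      rw [← hs]
      field_simp
    have hdf : HasDerivAt (fun x : ℝ => 2 * a * ((x - 2) / (x - 1)) - (x - 2) +
        Real.sqrt ((x - 2) ^ 2 + 4 * a))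
        (2 * a * (1 / (x-1)^2) - 1 + (x - 2) / s) x := by
      exact (((hd1.const_mul (2*a)).sub (((hasDerivAt_id x).sub_const 2))).add hd2)
    rw [hdf.deriv]
    -- positivity of derivative
    have hsx : x ≤ s := by
      have hx0 : 0 ≤ x := by linarith
      have : x^2 ≤ g := by nlinarith
      calc x = Real.sqrt (x^2) := (Real.sqrt_sq hx0).symm
        _ ≤ s := Real.sqrt_le_sqrt this
    have key : 2 * (x-1)^2 < s * (s + x - 2) := by nlinarith
    have h4a : s^2 - (x-2)^2 = 4 * a := by rw [hs2]; ring
    have hsp2 : 0 < s + x - 2 := by linarith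
    have c1 : (s - (x-2)) * (x-1)^2 < 2 * a * s := by
      have c2 : (s + x - 2) * ((s - (x-2)) * (x-1)^2) < (s + x - 2) * (2 * a * s) := by
        nlinarith [mul_pos ha0 (sub_pos.2 key)]
      exact lt_of_mul_lt_mul_left c2 hsp2.le
    have e1 : 1 - (x-2)/s = (s - (x-2))/s := by field_simp
    have e2 : (s - (x-2))/s < 2 * a / (x-1)^2 := by
      rw [div_lt_div_iff₀ hspos (pow_pos hx1pos 2)]
      exact c1
    have e3 : 2 * a * (1 / (x-1)^2) = 2 * a / (x-1)^2 := by ring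
    linarith [e2, e1, e3]
theorem stmt_3' (t : ℕ) (ht : 2 ≤ t) :
    (∀ n k : ℕ, 2 ≤ n → 2 ≤ k → (n - 1) * (k - 1) + 1 = t →
      2 * Real.sqrt ((t : ℝ) - 1) ≤ energy (hyperstar n k) ∧
      energy (hyperstar n k) ≤ 2 * ((t : ℝ) - 1)) ∧
    StrictMonoOn
      (fun x : ℝ => 2 * ((t : ℝ) - 1) * ((x - 2) / (x - 1)) - (x - 2) +
        Real.sqrt ((x - 2) ^ 2 + 4 * ((t : ℝ) - 1)))
      (Set.Icc (2 : ℝ) (t : ℝ)) := by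
  have ht' : (2:ℝ) ≤ (t:ℝ) := by exact_mod_cast ht
  set F : ℝ → ℝ := (fun x : ℝ => 2 * ((t : ℝ) - 1) * ((x - 2) / (x - 1)) - (x - 2) +
        Real.sqrt ((x - 2) ^ 2 + 4 * ((t : ℝ) - 1))) with hF
  have hmono := mono_part t ht
  have hF2 : F 2 = 2 * Real.sqrt ((t : ℝ) - 1) := by
    show 2 * ((t : ℝ) - 1) * (((2:ℝ) - 2) / ((2:ℝ) - 1)) - ((2:ℝ) - 2) +
        Real.sqrt (((2:ℝ) - 2) ^ 2 + 4 * ((t : ℝ) - 1)) = 2 * Real.sqrt ((t : ℝ) - 1)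
    have e1 : ((2:ℝ) - 2) ^ 2 + 4 * ((t : ℝ) - 1) = 4 * ((t:ℝ) - 1) := by ring
    rw [e1, show (4:ℝ) * ((t:ℝ)-1) = 2^2 * ((t:ℝ)-1) by ring,
      Real.sqrt_mul (by norm_num : (0:ℝ) ≤ 2^2), Real.sqrt_sq (by norm_num : (0:ℝ) ≤ 2)]
    norm_num
  have hFt : F (t:ℝ) = 2 * ((t : ℝ) - 1) := by
    show 2 * ((t : ℝ) - 1) * (((t:ℝ) - 2) / ((t:ℝ) - 1)) - ((t:ℝ) - 2) +
        Real.sqrt (((t:ℝ) - 2) ^ 2 + 4 * ((t : ℝ) - 1)) = 2 * ((t : ℝ) - 1)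
    have e1 : ((t:ℝ) - 2) ^ 2 + 4 * ((t : ℝ) - 1) = (t:ℝ)^2 := by ring
    rw [e1, Real.sqrt_sq (by linarith : (0:ℝ) ≤ (t:ℝ))]
    have ht1 : (t:ℝ) - 1 ≠ 0 := by intro h; nlinarith [sub_eq_zero.mp h]
    field_simp
    ring
  refine ⟨?_, hmono⟩
  intro n k hn hk htnk
  obtain ⟨N1, rfl⟩ : ∃ m, n = m + 1 := ⟨n-1, by omega⟩
  obtain ⟨K1, rfl⟩ : ∃ m, k = m + 1 := ⟨k-1, by omega⟩
  have hN1 : 1 ≤ N1 := by omega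
  have hK1 : 1 ≤ K1 := by omega
  have htnk' : N1 * K1 + 1 = t := by simpa [Nat.add_sub_cancel] using htnk
  have htv : t = N1 * K1 + 1 := htnk'.symm
  have hE := energy_hyperstar N1 K1 hN1 hK1
  rw [hE]
  have htR : (t:ℝ) - 1 = (N1:ℝ)*(K1:ℝ) := by rw [htv]; push_cast; ring
  have hK1R : (1:ℝ) ≤ (K1:ℝ) := by exact_mod_cast hK1
  have hN1R : (1:ℝ) ≤ (N1:ℝ) := by exact_mod_cast hN1
  -- value of F at k
  have hFk : F (((K1+1 : ℕ)):ℝ) = (2*(N1:ℝ) - 1)*((K1:ℝ)-1) + sQ N1 K1 := by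
    show 2 * ((t : ℝ) - 1) * ((((K1+1:ℕ):ℝ) - 2) / (((K1+1:ℕ):ℝ) - 1)) - (((K1+1:ℕ):ℝ) - 2) +
        Real.sqrt ((((K1+1:ℕ):ℝ) - 2) ^ 2 + 4 * ((t : ℝ) - 1))
        = (2*(N1:ℝ) - 1)*((K1:ℝ)-1) + sQ N1 K1
    rw [htR, sQ]
    push_cast
    have e1 : ((K1:ℝ) + 1 - 2) ^ 2 + 4 * ((N1:ℝ) * (K1:ℝ)) = ((K1:ℝ)-1)^2 + 4*((N1:ℝ)*(K1:ℝ)) := by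
      ring
    rw [e1]
    have hK0 : (K1:ℝ) + 1 - 1 ≠ 0 := by intro h; nlinarith
    field_simp
    ring
  -- memberships
  have mem2 : (2:ℝ) ∈ Set.Icc (2:ℝ) (t:ℝ) := ⟨le_refl _, ht'⟩
  have memt : (t:ℝ) ∈ Set.Icc (2:ℝ) (t:ℝ) := ⟨ht', le_refl _⟩
  have hk2 : (2:ℝ) ≤ ((K1+1:ℕ):ℝ) := by
    have : 2 ≤ K1 + 1 := by omega
    exact_mod_cast this
  have hkt : ((K1+1:ℕ):ℝ) ≤ (t:ℝ) := by
    have : K1 + 1 ≤ t := by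
      rw [htv]; nlinarith
    exact_mod_cast this
  have memk : (((K1+1:ℕ)):ℝ) ∈ Set.Icc (2:ℝ) (t:ℝ) := ⟨hk2, hkt⟩
  have hmon := hmono.monotoneOn
  constructor
  · have h1 : F 2 ≤ F (((K1+1:ℕ)):ℝ) := hmon mem2 memk hk2
    rw [hF2, hFk] at h1
    exact h1
  · have h1 : F (((K1+1:ℕ)):ℝ) ≤ F (t:ℝ) := hmon memk memt hkt
    rw [hFt, hFk] at h1
    exact h1

end Aux

/-- among hyperstars with `t` vertices (`t = (n-1)(k-1)+1`), the energy is at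
least that of the star `S_t`, namely `2√(t-1)`, and at most that of `(S_2)^t`, namely
`2(t-1)`; equivalently the function
`f(x) = 2(t-1)(x-2)/(x-1) - (x-2) + √((x-2)² + 4(t-1))` is increasing on `[2, t]`. -/
theorem stmt_3 (t : ℕ) (ht : 2 ≤ t) :
    (∀ n k : ℕ, 2 ≤ n → 2 ≤ k → (n - 1) * (k - 1) + 1 = t →
      2 * Real.sqrt ((t : ℝ) - 1) ≤ energy (hyperstar n k) ∧
      energy (hyperstar n k) ≤ 2 * ((t : ℝ) - 1)) ∧
    StrictMonoOn
      (fun x : ℝ => 2 * ((t : ℝ) - 1) * ((x - 2) / (x - 1)) - (x - 2) +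
        Real.sqrt ((x - 2) ^ 2 + 4 * ((t : ℝ) - 1)))
      (Set.Icc (2 : ℝ) (t : ℝ)) := by
  exact stmt_3' t ht
end

section
/- Let H be a hypergraph, e an edge, and e = e' ∪ e'' a partition of e into two nonempty disjoint parts. Then |E(H) - E(H ◁ e)| ≤ 2√(|e'||e''|), where H ◁ e is the multi-hypergraph obtained by replacing the edge e by the two edges e' and e''. -/
open Matrix BigOperators

set_option linter.unusedSectionVars false

variable {V : Type*} [Fintype V] [DecidableEq V]

/-!
The energy of a Hermitian matrix is its trace norm `‖A‖₁ = ∑ |λᵢ|`, and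
`‖A‖₁ = max_S tr (S A)` over orthogonal `S`, the maximum being attained at the sign matrix of `A`
(writing `A = Q D Qᵀ`, `tr (S A) = ∑ⱼ (Qᵀ S Q)ⱼⱼ λⱼ`, and the diagonal entries of an orthogonal
matrix lie in `[-1, 1]`). Hence `|‖A‖₁ - ‖B‖₁| ≤ max_S tr (S (A - B))`. Splitting `e` into
`e'` and `e''` changes the adjacency matrix by `x yᵀ + y xᵀ`, with `x`, `y` the indicator vectors
of `e'`, `e''`, and by Cauchy–Schwarz `tr (S (x yᵀ + y xᵀ)) = ⟪S x, y⟫ + ⟪S y, x⟫ ≤ 2 ‖x‖ ‖y‖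
= 2 √(|e'| |e''|)`.
-/

namespace Matrix

variable {n : Type*} [Fintype n] [DecidableEq n]

noncomputable def IsHermitian.traceNorm {A : Matrix n n ℝ} (hA : A.IsHermitian) : ℝ :=
  ∑ i, |hA.eigenvalues i|

lemma IsHermitian.eq_eigenvectorUnitary_mul_diagonal {A : Matrix n n ℝ} (hA : A.IsHermitian) :
    A = (hA.eigenvectorUnitary : Matrix n n ℝ) * diagonal hA.eigenvalues *
      star (hA.eigenvectorUnitary : Matrix n n ℝ) := by
  conv_lhs => rw [hA.spectral_theorem, Unitary.conjStarAlgAut_apply]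
  rfl

lemma neg_mem_unitaryGroup {α : Type*} [CommRing α] [StarRing α] {S : Matrix n n α}
    (hS : S ∈ unitaryGroup n α) : -S ∈ unitaryGroup n α := by
  rw [mem_unitaryGroup_iff] at hS ⊢
  simpa using hS

lemma trace_mul_le_traceNorm {S B : Matrix n n ℝ} (hS : S ∈ unitaryGroup n ℝ)
    (hB : B.IsHermitian) : trace (S * B) ≤ hB.traceNorm := by
  set W : Matrix n n ℝ := ↑hB.eigenvectorUnitary
  have hQ : star W * S * W ∈ unitaryGroup n ℝ :=
    mul_mem (mul_mem (Unitary.star_mem hB.eigenvectorUnitary.2) hS) hB.eigenvectorUnitary.2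
  have htrace : trace (S * B) = ∑ j, (star W * S * W) j j * hB.eigenvalues j := by
    conv_lhs => rw [hB.eq_eigenvectorUnitary_mul_diagonal, ← Matrix.mul_assoc,
      ← Matrix.mul_assoc, trace_mul_comm, ← Matrix.mul_assoc, ← Matrix.mul_assoc]
    simp only [trace, diag_apply, mul_diagonal]
    rfl
  rw [htrace, IsHermitian.traceNorm]
  refine Finset.sum_le_sum fun j _ => ?_
  calc (star W * S * W) j j * hB.eigenvalues j
      ≤ |(star W * S * W) j j| * |hB.eigenvalues j| := by rw [← abs_mul]; exact le_abs_self _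
    _ ≤ 1 * |hB.eigenvalues j| := by
      gcongr
      exact entry_norm_bound_of_unitary hQ j j
    _ = |hB.eigenvalues j| := one_mul _

/-- Zero eigenvalues get the sign `+1`, so that the matrix is orthogonal. -/
noncomputable def IsHermitian.signMatrix {A : Matrix n n ℝ} (hA : A.IsHermitian) :
    Matrix n n ℝ :=
  (hA.eigenvectorUnitary : Matrix n n ℝ) *
    diagonal (fun i => if 0 ≤ hA.eigenvalues i then 1 else -1) *
    star (hA.eigenvectorUnitary : Matrix n n ℝ)

lemma IsHermitian.signMatrix_mem_unitaryGroup {A : Matrix n n ℝ} (hA : A.IsHermitian) :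
    hA.signMatrix ∈ unitaryGroup n ℝ := by
  have hD : diagonal (fun i => if 0 ≤ hA.eigenvalues i then (1 : ℝ) else -1) ∈
      unitaryGroup n ℝ := by
    rw [mem_unitaryGroup_iff, star_eq_conjTranspose, diagonal_conjTranspose,
      diagonal_mul_diagonal, ← diagonal_one]
    congr 1
    ext i
    split_ifs with h <;> simp [h]
  exact mul_mem (mul_mem hA.eigenvectorUnitary.2 hD) (Unitary.star_mem hA.eigenvectorUnitary.2)

lemma IsHermitian.trace_signMatrix_mul_self {A : Matrix n n ℝ} (hA : A.IsHermitian) :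
    trace (hA.signMatrix * A) = hA.traceNorm := by
  set U : Matrix n n ℝ := ↑hA.eigenvectorUnitary
  have hUU : star U * U = 1 := Unitary.coe_star_mul_self hA.eigenvectorUnitary
  nth_rw 2 [hA.eq_eigenvectorUnitary_mul_diagonal]
  rw [signMatrix]
  simp only [Matrix.mul_assoc]
  rw [← Matrix.mul_assoc (star U) U, hUU, Matrix.one_mul, trace_mul_comm]
  simp only [Matrix.mul_assoc]
  rw [hUU, Matrix.mul_one, diagonal_mul_diagonal, trace_diagonal]
  refine Finset.sum_congr rfl fun i _ => ?_
  split_ifs with h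
  · rw [one_mul, abs_of_nonneg h]
  · rw [neg_one_mul, abs_of_neg (not_le.mp h)]

lemma abs_sub_traceNorm_le {A B : Matrix n n ℝ} (hA : A.IsHermitian) (hB : B.IsHermitian)
    {c : ℝ} (hc : ∀ S ∈ unitaryGroup n ℝ, trace (S * (A - B)) ≤ c) :
    |hA.traceNorm - hB.traceNorm| ≤ c := by
  have hAB : hA.traceNorm ≤ hB.traceNorm + c :=
    calc hA.traceNorm = trace (hA.signMatrix * B) + trace (hA.signMatrix * (A - B)) := by
          rw [← trace_add, ← Matrix.mul_add, add_sub_cancel, hA.trace_signMatrix_mul_self]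
      _ ≤ hB.traceNorm + c :=
          add_le_add (trace_mul_le_traceNorm hA.signMatrix_mem_unitaryGroup hB)
            (hc _ hA.signMatrix_mem_unitaryGroup)
  have hBA : hB.traceNorm ≤ hA.traceNorm + c :=
    calc hB.traceNorm = trace (hB.signMatrix * A) + trace (-hB.signMatrix * (A - B)) := by
          rw [Matrix.neg_mul, trace_neg, ← sub_eq_add_neg, ← trace_sub, ← Matrix.mul_sub,
            sub_sub_cancel, hB.trace_signMatrix_mul_self]
      _ ≤ hA.traceNorm + c :=
          add_le_add (trace_mul_le_traceNorm hB.signMatrix_mem_unitaryGroup hA)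
            (hc _ (neg_mem_unitaryGroup hB.signMatrix_mem_unitaryGroup))
  exact abs_sub_le_iff.mpr ⟨by linarith, by linarith⟩

lemma sum_mulVec_sq_of_mem_unitaryGroup {S : Matrix n n ℝ} (hS : S ∈ unitaryGroup n ℝ)
    (x : n → ℝ) : ∑ i, (S *ᵥ x) i ^ 2 = ∑ i, x i ^ 2 := by
  have hSS : Sᵀ * S = 1 := by
    rw [← conjTranspose_eq_transpose_of_trivial, ← star_eq_conjTranspose]
    exact mem_unitaryGroup_iff'.mp hS
  have h : (S *ᵥ x) ⬝ᵥ (S *ᵥ x) = x ⬝ᵥ x := by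
    rw [dotProduct_mulVec, ← mulVec_transpose, mulVec_mulVec, hSS, one_mulVec]
  simpa [dotProduct, sq] using h

lemma trace_mul_vecMulVec_add_le {S : Matrix n n ℝ} (hS : S ∈ unitaryGroup n ℝ)
    (x y : n → ℝ) :
    trace (S * (vecMulVec x y + vecMulVec y x)) ≤
      2 * √((∑ i, x i ^ 2) * ∑ i, y i ^ 2) := by
  have hx : (S *ᵥ x) ⬝ᵥ y ≤ √(∑ i, x i ^ 2) * √(∑ i, y i ^ 2) := by
    rw [← sum_mulVec_sq_of_mem_unitaryGroup hS x]
    exact Real.sum_mul_le_sqrt_mul_sqrt _ _ _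
  have hy : (S *ᵥ y) ⬝ᵥ x ≤ √(∑ i, x i ^ 2) * √(∑ i, y i ^ 2) := by
    rw [← sum_mulVec_sq_of_mem_unitaryGroup hS y, mul_comm]
    exact Real.sum_mul_le_sqrt_mul_sqrt _ _ _
  rw [Matrix.mul_add, trace_add, mul_vecMulVec, mul_vecMulVec, trace_vecMulVec, trace_vecMulVec,
    Real.sqrt_mul (Finset.sum_nonneg fun i _ => sq_nonneg (x i))]
  linarith

end Matrix

lemma adjacencyMatrix_add (E F : Multiset (Finset V)) :
    adjacencyMatrix (E + F) = adjacencyMatrix E + adjacencyMatrix F := by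
  ext i j
  by_cases hij : i = j <;> simp [adjacencyMatrix, hij]

lemma adjacencyMatrix_singleton_apply (f : Finset V) (i j : V) :
    adjacencyMatrix {f} i j = if i ≠ j ∧ i ∈ f ∧ j ∈ f then 1 else 0 := by
  by_cases hij : i = j <;> by_cases hf : i ∈ f ∧ j ∈ f <;>
    simp [adjacencyMatrix, Multiset.filter_singleton, hij, hf]

lemma adjacencyMatrix_cons_sub_cons_cons (E : Multiset (Finset V)) {e' e'' : Finset V}
    (hdisj : Disjoint e' e'') :
    adjacencyMatrix ((e' ∪ e'') ::ₘ E) - adjacencyMatrix (e' ::ₘ e'' ::ₘ E) =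
      vecMulVec ((e' : Set V).indicator 1) ((e'' : Set V).indicator 1) +
        vecMulVec ((e'' : Set V).indicator 1) ((e' : Set V).indicator 1) := by
  simp only [← Multiset.singleton_add, adjacencyMatrix_add]
  ext i j
  have hi : i ∈ e' → i ∉ e'' := fun h => Finset.disjoint_left.mp hdisj h
  have hj : j ∈ e' → j ∉ e'' := fun h => Finset.disjoint_left.mp hdisj h
  simp only [Matrix.sub_apply, Matrix.add_apply, adjacencyMatrix_singleton_apply, vecMulVec_apply,
    Set.indicator_apply, Finset.mem_coe, Finset.mem_union, Pi.one_apply]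
  split_ifs <;> simp_all

lemma sum_indicator_one_sq (s : Finset V) :
    ∑ v, (s : Set V).indicator (1 : V → ℝ) v ^ 2 = s.card := by
  simp [Set.indicator_apply, ite_pow, Finset.sum_ite_mem]

theorem stmt_15_general (E : Finset (Finset V))
    (e e' e'' : Finset V) (he : e ∈ E)
    (hdisj : Disjoint e' e'')
    (hsplit : e = e' ∪ e'') :
    |energy E.val - energy (e' ::ₘ e'' ::ₘ (E.erase e).val)| ≤
      2 * Real.sqrt ((e'.card : ℝ) * (e''.card : ℝ)) := by
  have hE : E.val = (e' ∪ e'') ::ₘ (E.erase e).val := by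
    rw [← hsplit, Finset.erase_val, Multiset.cons_erase (Finset.mem_val.mpr he)]
  refine abs_sub_traceNorm_le (adjacency_isHermitian _) (adjacency_isHermitian _) fun S hS => ?_
  rw [hE, adjacencyMatrix_cons_sub_cons_cons _ hdisj]
  simpa [sum_indicator_one_sq] using trace_mul_vecMulVec_add_le hS
    ((e' : Set V).indicator 1) ((e'' : Set V).indicator 1)

/-- dividing an edge `e` into two nonempty disjoint parts `e'` and `e''`
changes the energy by at most `2√(|e'||e''|)`. -/
theorem stmt_15 (E : Finset (Finset V)) (hcard : ∀ f ∈ E, 2 ≤ f.card)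
    (e e' e'' : Finset V) (he : e ∈ E)
    (hne' : e'.Nonempty) (hne'' : e''.Nonempty) (hdisj : Disjoint e' e'')
    (hsplit : e = e' ∪ e'') :
    |energy E.val - energy (e' ::ₘ e'' ::ₘ (E.erase e).val)| ≤
      2 * Real.sqrt ((e'.card : ℝ) * (e''.card : ℝ)) :=
  stmt_15_general E e e' e'' he hdisj hsplit
end

section
/- Let H be a hypergraph with n vertices, co-rank s, and eigenvalues λ_1, ..., λ_n of its adjacency matrix A. Then E(H)² ≥ Σ_i λ_i² + n(n-1)|det(A)|^{2/n}, and consequently E(H) ≥ √( (n/(n-1)) λ_1² + n(n-1)|det(A)|^{2/n} ). -/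
open Matrix BigOperators

set_option linter.unusedSectionVars false

variable {V : Type*} [Fintype V] [DecidableEq V]

/-! With `λ` the eigenvalues of `A` and `n` the number of vertices,
`E(H)² = ∑ λ i ^ 2 + ∑_{i ≠ j} |λ i| |λ j|`. The `n(n-1)` off-diagonal terms multiply to
`|det A| ^ (2(n-1))`, so by AM-GM their sum is at least `n(n-1) |det A| ^ (2/n)`.
Since `trace A = 0`, the eigenvalues other than the largest one `λ₁` sum to `-λ₁`, and
Cauchy–Schwarz on them gives `∑ λ i ^ 2 ≥ n/(n-1) λ₁²`. -/

open Finset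

namespace Finset

variable {ι : Type*} [DecidableEq ι]

theorem offDiag_eq_filter (s : Finset ι) : s.offDiag = (s ×ˢ s).filter fun p => p.1 ≠ p.2 := by
  ext; simp [and_assoc]

theorem prod_offDiag_fst {M : Type*} [CommMonoid M] (s : Finset ι) (f : ι → M) :
    ∏ p ∈ s.offDiag, f p.1 = (∏ i ∈ s, f i) ^ (#s - 1) := by
  rw [offDiag_eq_filter, prod_filter, prod_product, ← prod_pow]
  refine prod_congr rfl fun i hi => ?_
  rw [← prod_filter, filter_ne, ← card_erase_of_mem hi]
  exact prod_const (f _)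

theorem prod_offDiag_snd {M : Type*} [CommMonoid M] (s : Finset ι) (f : ι → M) :
    ∏ p ∈ s.offDiag, f p.2 = (∏ i ∈ s, f i) ^ (#s - 1) := by
  rw [offDiag_eq_filter, prod_filter, prod_product_right, ← prod_pow]
  refine prod_congr rfl fun j hj => ?_
  rw [← prod_filter, filter_ne', ← card_erase_of_mem hj]
  exact prod_const (f _)

theorem prod_offDiag_mul {M : Type*} [CommMonoid M] (s : Finset ι) (f : ι → M) :
    ∏ p ∈ s.offDiag, f p.1 * f p.2 = (∏ i ∈ s, f i) ^ (2 * (#s - 1)) := by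
  rw [prod_mul_distrib, prod_offDiag_fst, prod_offDiag_snd, ← pow_add, two_mul]

theorem sq_sum_eq_sum_sq_add_sum_offDiag {R : Type*} [CommSemiring R] (s : Finset ι)
    (f : ι → R) :
    (∑ i ∈ s, f i) ^ 2 = ∑ i ∈ s, f i ^ 2 + ∑ p ∈ s.offDiag, f p.1 * f p.2 := by
  rw [sq, sum_mul_sum, ← sum_product', ← diag_union_offDiag,
    sum_union (disjoint_diag_offDiag s), sum_diag]
  simp only [sq]

end Finset

namespace Real

variable {ι : Type*} [DecidableEq ι]

theorem card_mul_card_sub_one_mul_prod_rpow_le_sum_offDiag (s : Finset ι) {a : ι → ℝ}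
    (ha : ∀ i ∈ s, 0 ≤ a i) :
    (#s : ℝ) * (#s - 1) * (∏ i ∈ s, a i) ^ ((2 : ℝ) / #s) ≤
      ∑ p ∈ s.offDiag, a p.1 * a p.2 := by
  have hpair : ∀ p ∈ s.offDiag, 0 ≤ a p.1 * a p.2 := fun p hp =>
    mul_nonneg (ha _ (mem_offDiag.1 hp).1) (ha _ (mem_offDiag.1 hp).2.1)
  rcases le_or_gt #s 1 with hs | hs
  · have : (#s : ℝ) * (#s - 1) ≤ 0 := by
      rcases Nat.le_one_iff_eq_zero_or_eq_one.1 hs with h | h <;> simp [h]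
    exact (mul_nonpos_of_nonpos_of_nonneg this (rpow_nonneg (prod_nonneg ha) _)).trans
      (sum_nonneg hpair)
  have hcard : (#s.offDiag : ℝ) = #s * (#s - 1) := by
    rw [offDiag_card, Nat.cast_sub (Nat.le_mul_self _)]
    push_cast
    ring
  have hpos : (0 : ℝ) < #s.offDiag := by
    have : (1 : ℝ) < #s := by exact_mod_cast hs
    rw [hcard]
    exact mul_pos (by linarith) (by linarith)
  have amgm := geom_mean_le_arith_mean s.offDiag (fun _ => 1) (fun p => a p.1 * a p.2)
    (fun _ _ => zero_le_one) (by simpa using hpos) hpair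
  simp only [rpow_one, one_mul, sum_const, nsmul_eq_mul, mul_one, prod_offDiag_mul] at amgm
  rw [le_div_iff₀ hpos, ← rpow_natCast, ← rpow_mul (prod_nonneg ha), hcard] at amgm
  have hexp : ((2 * (#s - 1) : ℕ) : ℝ) * ((#s : ℝ) * (#s - 1))⁻¹ = 2 / #s := by
    have : (#s : ℝ) - 1 ≠ 0 := by
      rw [sub_ne_zero]; exact_mod_cast hs.ne'
    rw [Nat.cast_mul, Nat.cast_sub hs.le]
    field_simp
    ring
  rwa [hexp, mul_comm] at amgm

theorem sum_sq_add_card_mul_abs_prod_rpow_le_sq_sum_abs (s : Finset ι) (x : ι → ℝ) :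
    ∑ i ∈ s, x i ^ 2 + #s * (#s - 1) * |∏ i ∈ s, x i| ^ ((2 : ℝ) / #s) ≤
      (∑ i ∈ s, |x i|) ^ 2 := by
  rw [sq_sum_eq_sum_sq_add_sum_offDiag, abs_prod]
  simp only [sq_abs]
  gcongr
  exact card_mul_card_sub_one_mul_prod_rpow_le_sum_offDiag s fun i _ => abs_nonneg (x i)

theorem card_div_mul_sq_le_sum_sq_of_sum_eq_zero {s : Finset ι} {x : ι → ℝ}
    (hx : ∑ i ∈ s, x i = 0) {k : ι} (hk : k ∈ s) :
    (#s : ℝ) / (#s - 1) * x k ^ 2 ≤ ∑ i ∈ s, x i ^ 2 := by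
  rw [← add_sum_erase s _ hk] at hx ⊢
  have hrest : x k ^ 2 ≤ (#s - 1) * ∑ i ∈ s.erase k, x i ^ 2 := by
    have := sq_sum_le_card_mul_sum_sq (s := s.erase k) (f := x)
    rwa [eq_neg_of_add_eq_zero_right hx, neg_sq, card_erase_of_mem hk,
      Nat.cast_sub (one_le_card.2 ⟨k, hk⟩), Nat.cast_one] at this
  rcases (show (1 : ℝ) ≤ #s by exact_mod_cast one_le_card.2 ⟨k, hk⟩).eq_or_lt with h | h
  · rw [← h, sub_self, div_zero, zero_mul]
    positivity
  · rw [div_mul_eq_mul_div, div_le_iff₀ (sub_pos.2 h)]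
    linarith

theorem card_div_mul_iSup_sq_le_sum_sq_of_sum_eq_zero [Fintype ι] {x : ι → ℝ}
    (hx : ∑ i, x i = 0) :
    (Fintype.card ι : ℝ) / (Fintype.card ι - 1) * (⨆ i, x i) ^ 2 ≤ ∑ i, x i ^ 2 := by
  rcases isEmpty_or_nonempty ι with hι | hι
  · simp
  obtain ⟨k, hk⟩ := exists_eq_ciSup_of_finite (f := x)
  rw [← hk]
  exact card_div_mul_sq_le_sum_sq_of_sum_eq_zero hx (mem_univ k)

end Real

theorem trace_adjacencyMatrix (E : Multiset (Finset V)) : (adjacencyMatrix E).trace = 0 := by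
  simp [Matrix.trace, adjacencyMatrix]

theorem stmt_19_general (E : Finset (Finset V)) :
    energy E.val ^ 2 ≥
      (∑ i, (adjacency_isHermitian E.val).eigenvalues i ^ 2) +
        (Fintype.card V : ℝ) * ((Fintype.card V : ℝ) - 1) *
          |(adjacencyMatrix E.val).det| ^ ((2 : ℝ) / (Fintype.card V : ℝ)) ∧
    energy E.val ≥
      Real.sqrt (((Fintype.card V : ℝ) / ((Fintype.card V : ℝ) - 1)) *
          (⨆ i, (adjacency_isHermitian E.val).eigenvalues i) ^ 2 +
        (Fintype.card V : ℝ) * ((Fintype.card V : ℝ) - 1) *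
          |(adjacencyMatrix E.val).det| ^ ((2 : ℝ) / (Fintype.card V : ℝ))) := by
  set hA := adjacency_isHermitian E.val
  have hdet : (adjacencyMatrix E.val).det = ∏ i, hA.eigenvalues i := by
    simpa using hA.det_eq_prod_eigenvalues
  have htrace : ∑ i, hA.eigenvalues i = 0 := by
    simpa [trace_adjacencyMatrix] using hA.trace_eq_sum_eigenvalues.symm
  have hsq : ∑ i, hA.eigenvalues i ^ 2 + Fintype.card V * (Fintype.card V - 1) *
      |(adjacencyMatrix E.val).det| ^ ((2 : ℝ) / Fintype.card V) ≤ energy E.val ^ 2 := by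
    rw [hdet, ← card_univ]
    exact Real.sum_sq_add_card_mul_abs_prod_rpow_le_sq_sum_abs univ hA.eigenvalues
  refine ⟨hsq, ?_⟩
  have hmax := Real.card_div_mul_iSup_sq_le_sum_sq_of_sum_eq_zero htrace
  exact Real.sqrt_le_iff.2 ⟨sum_nonneg fun i _ => abs_nonneg (hA.eigenvalues i), by linarith⟩

/-- for a hypergraph with `n` vertices and adjacency matrix `A` with
eigenvalues `λ_i`, `E(H)² ≥ Σ λ_i² + n(n-1)|det A|^{2/n}`, and consequently
`E(H) ≥ √( (n/(n-1)) λ₁² + n(n-1)|det A|^{2/n} )`. -/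
theorem stmt_19 [Nonempty V] (E : Finset (Finset V)) (hcard : ∀ e ∈ E, 2 ≤ e.card) :
    energy E.val ^ 2 ≥
      (∑ i, (adjacency_isHermitian E.val).eigenvalues i ^ 2) +
        (Fintype.card V : ℝ) * ((Fintype.card V : ℝ) - 1) *
          |(adjacencyMatrix E.val).det| ^ ((2 : ℝ) / (Fintype.card V : ℝ)) ∧
    energy E.val ≥
      Real.sqrt (((Fintype.card V : ℝ) / ((Fintype.card V : ℝ) - 1)) *
          (⨆ i, (adjacency_isHermitian E.val).eigenvalues i) ^ 2 +
        (Fintype.card V : ℝ) * ((Fintype.card V : ℝ) - 1) *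
          |(adjacencyMatrix E.val).det| ^ ((2 : ℝ) / (Fintype.card V : ℝ))) :=
  stmt_19_general E
end
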